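/- Let t > 0 and F(x) = |x| + (x − t)²/(2t). Then (∫_{−∞}^0 exp(−F(x)/T) dx) / (∫_ℝ exp(−F(x)/T) dx) → 0 as T → 0⁺; that is, P(X_T(t,t) < 0) → 0 as T → 0⁺. -/

import Mathlib

/-!
Completing the square, `F(x) = t/2 + x²/(2t) + (|x| - x)`, so the factor `e^{-t/(2T)}` is common
to both integrals. On `(-∞, 0]` what remains is at most `e^{2x/T}`, of mass `T/2`, while on
`[0, √T]` it is at least `e^{-1/(2t)}`, so the denominator carries mass at least
`e^{-1/(2t)} √T`. The ratio is therefore `O(√T)`.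
-/

open Filter MeasureTheory

/-- The one-dimensional objective `F(x) = |x| + (x − y)²/(2t)`. -/
noncomputable def obj1 (y t x : ℝ) : ℝ := |x| + (x - y) ^ 2 / (2 * t)

open Real Set

lemma neg_obj1_self_div_eq {t T : ℝ} (ht : t ≠ 0) (hT : T ≠ 0) (x : ℝ) :
    -obj1 t t x / T = -t / (2 * T) - (2 * t * T)⁻¹ * x ^ 2 - (|x| - x) / T := by
  unfold obj1
  field_simp
  ring

lemma integrable_exp_neg_obj1_div {t T : ℝ} (ht : 0 < t) (hT : 0 < T) :
    Integrable fun x => exp (-obj1 t t x / T) := by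
  refine ((integrable_exp_neg_mul_sq (by positivity : 0 < (2 * t * T)⁻¹)).const_mul
    (exp (-t / (2 * T)))).mono' (by unfold obj1; fun_prop) (.of_forall fun x => ?_)
  rw [norm_of_nonneg (exp_pos _).le, ← exp_add, exp_le_exp, neg_obj1_self_div_eq ht.ne' hT.ne']
  have : 0 ≤ (|x| - x) / T := div_nonneg (sub_nonneg.2 (le_abs_self x)) hT.le
  linarith

lemma mul_le_integral_of_le_on_Icc {f : ℝ → ℝ} (hf : Integrable f) (hf0 : 0 ≤ f) {a b c : ℝ}
    (hab : a ≤ b) (h : ∀ x ∈ Icc a b, c ≤ f x) : c * (b - a) ≤ ∫ x, f x :=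
  calc c * (b - a) = c * volume.real (Icc a b) := by rw [Real.volume_real_Icc_of_le hab]
    _ ≤ ∫ x in Icc a b, f x :=
        setIntegral_ge_of_const_le_real measurableSet_Icc (by simp) h hf.integrableOn
    _ ≤ ∫ x, f x := setIntegral_le_integral hf (.of_forall hf0)

lemma setIntegral_Iic_exp_neg_obj1_div_le {t T : ℝ} (ht : 0 < t) (hT : 0 < T) :
    ∫ x in Iic 0, exp (-obj1 t t x / T) ≤ exp (-t / (2 * T)) * (T / 2) := by
  have hrate : 0 < 2 / T := by positivity
  calc ∫ x in Iic 0, exp (-obj1 t t x / T)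
      ≤ ∫ x in Iic 0, exp (-t / (2 * T)) * exp (2 / T * x) := by
        refine setIntegral_mono_on (integrable_exp_neg_obj1_div ht hT).integrableOn
          ((integrableOn_exp_mul_Iic hrate 0).const_mul _) measurableSet_Iic fun x hx => ?_
        rw [← exp_add, exp_le_exp, neg_obj1_self_div_eq ht.ne' hT.ne', abs_of_nonpos hx]
        have : 0 ≤ (2 * t * T)⁻¹ * x ^ 2 := by positivity
        have : (-x - x) / T = -(2 / T * x) := by ring
        linarith
    _ = exp (-t / (2 * T)) * (T / 2) := by
        rw [integral_const_mul, integral_exp_mul_Iic hrate]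
        simp

lemma exp_mul_sqrt_le_integral_exp_neg_obj1_div {t T : ℝ} (ht : 0 < t) (hT : 0 < T) :
    exp (-t / (2 * T) - 1 / (2 * t)) * √T ≤ ∫ x, exp (-obj1 t t x / T) := by
  refine sub_zero √T ▸ mul_le_integral_of_le_on_Icc (integrable_exp_neg_obj1_div ht hT)
    (fun x => (exp_pos _).le) (sqrt_nonneg T) fun x ⟨hx0, hxT⟩ => ?_
  rw [exp_le_exp, neg_obj1_self_div_eq ht.ne' hT.ne', abs_of_nonneg hx0, sub_self, zero_div,
    sub_zero, sub_le_sub_iff_left]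
  calc (2 * t * T)⁻¹ * x ^ 2 ≤ (2 * t * T)⁻¹ * T := by gcongr; nlinarith [sq_sqrt hT.le]
    _ = 1 / (2 * t) := by field_simp

lemma setIntegral_Iic_div_integral_exp_neg_obj1_div_le {t T : ℝ} (ht : 0 < t) (hT : 0 < T) :
    (∫ x in Iic 0, exp (-obj1 t t x / T)) / ∫ x, exp (-obj1 t t x / T) ≤
      exp (1 / (2 * t)) * √T / 2 := by
  have hden : 0 < exp (-t / (2 * T) - 1 / (2 * t)) * √T := by positivity
  calc _ ≤ exp (-t / (2 * T)) * (T / 2) / (exp (-t / (2 * T) - 1 / (2 * t)) * √T) :=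
        div_le_div₀ (by positivity) (setIntegral_Iic_exp_neg_obj1_div_le ht hT) hden
          (exp_mul_sqrt_le_integral_exp_neg_obj1_div ht hT)
    _ = exp (1 / (2 * t)) * √T / 2 := by
        rw [div_eq_iff hden.ne', exp_sub]
        field_simp
        rw [sq_sqrt hT.le]

/-- For `y = t`, `P(X_T(t,t) < 0) → 0` as `T → 0⁺`. -/
theorem stmt13 (t : ℝ) (ht : 0 < t) :
    Tendsto
      (fun T : ℝ =>
        (∫ x in Set.Iic (0 : ℝ), Real.exp (-(obj1 t t x) / T)) /
          ∫ x : ℝ, Real.exp (-(obj1 t t x) / T))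
      (nhdsWithin 0 (Set.Ioi 0)) (nhds 0) := by
  have hbound :
      Tendsto (fun T => exp (1 / (2 * t)) * √T / 2) (nhdsWithin 0 (Ioi 0)) (nhds 0) := by
    have hcont : Continuous fun T => exp (1 / (2 * t)) * √T / 2 := by fun_prop
    exact (hcont.tendsto' 0 0 (by simp)).mono_left nhdsWithin_le_nhds
  refine squeeze_zero' ?_ ?_ hbound
  · filter_upwards with T
    exact div_nonneg (integral_nonneg fun x => (exp_pos _).le)
      (integral_nonneg fun x => (exp_pos _).le)
  · filter_upwards [self_mem_nhdsWithin] with T hT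
    exact setIntegral_Iic_div_integral_exp_neg_obj1_div_le ht hT
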